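/- arXiv:1208.3453 — 6 statements merged into one kernel-verified Lean document; each statement's English description precedes it below -/
import Mathlib

section
/- Let N be a positive integer, e a positive divisor of N, k an integer, and f a modular form of weight k for Γ₀(N). Set h = N / gcd(e², N) and define g = Σ_{j=0}^{h−1} f ∣[k] (U_e·T^j). Then for every matrix δ = [[a,b],[c,d]] ∈ Γ₀(N) satisfying a ≡ d (mod gcd(e, N/e)), one has g ∣[k] δ = g. -/
/-!
Write `h = N / gcd(e², N)` and `g₀ = gcd(e, N/e)`, so that `N = e g₀ h` and `e = g₀ u` with `u`
prime to `h`. For `δ = [[a,b],[c,d]]` with `a - d = g₀ t`, the lower-left entry of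
`(U_e T^j) δ (U_e T^{j'})⁻¹` is `e g₀ (t - u (b + j d - j' a))` modulo `N`, so this matrix lies in
`Γ₀(N)` as soon as `u (b + j d - j' a) ≡ t (mod h)`. As `a d ≡ 1` and `u` is invertible mod `h`,
this congruence defines `j'` as an affine bijection of `j ∈ ℤ/h`; hence slashing by `δ` permutes
the summands of `g`.
-/

open ModularForm UpperHalfPlane Matrix CongruenceSubgroup
open scoped MatrixGroups ModularForm

/-- The matrix `U_e = [[1,0],[e,1]]` in `SL(2, ℤ)`. -/
def Ue (e : ℤ) : SL(2, ℤ) :=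
  ⟨!![1, 0; e, 1], by norm_num [Matrix.det_fin_two_of]⟩

lemma slash_slash_eq_slash_of_mul_mul_inv_mem {F : Type*} [FunLike F ℍ ℂ] {Γ : Subgroup SL(2, ℤ)}
    {k : ℤ} [SlashInvariantFormClass F Γ k] (f : F) {γ δ γ' : SL(2, ℤ)}
    (h : γ * δ * γ'⁻¹ ∈ Γ) : (⇑f ∣[k] γ) ∣[k] δ = ⇑f ∣[k] γ' := by
  rw [← SlashAction.slash_mul, ← inv_mul_cancel_right (γ * δ) γ', SlashAction.slash_mul]
  congr 1
  exact SlashInvariantForm.slash_action_eqn f _ (Subgroup.mem_map_of_mem _ h)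

lemma coe_Ue (e : ℤ) : (Ue e : Matrix (Fin 2) (Fin 2) ℤ) = !![1, 0; e, 1] := rfl

lemma coe_T_pow (j : ℕ) :
    ((ModularGroup.T ^ j : SL(2, ℤ)) : Matrix (Fin 2) (Fin 2) ℤ) = !![1, (j : ℤ); 0, 1] := by
  rw [← zpow_natCast, ModularGroup.coe_T_zpow]

lemma Ue_mul_T_pow_mul_mul_inv_one_zero (e : ℤ) (j j' : ℕ) (δ : SL(2, ℤ)) :
    ((Ue e * ModularGroup.T ^ j * δ * (Ue e * ModularGroup.T ^ j')⁻¹ : SL(2, ℤ)) :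
      Matrix (Fin 2) (Fin 2) ℤ) 1 0 =
      e * (δ 0 0 - δ 1 1) - e ^ 2 * (δ 0 1 + j * δ 1 1 - j' * δ 0 0)
        + δ 1 0 * (e * j + 1) * (e * j' + 1) := by
  simp only [Matrix.SpecialLinearGroup.coe_mul, Matrix.SpecialLinearGroup.coe_inv, coe_Ue,
    coe_T_pow, adjugate_fin_two]
  rw [eta_fin_two (δ : Matrix (Fin 2) (Fin 2) ℤ)]
  simp only [mul_fin_two, of_apply, cons_val_zero, cons_val_one, cons_val_fin_one, Fin.isValue]
  ring

lemma Ue_mul_T_pow_mul_mul_inv_mem_Gamma0 {N : ℕ} {e : ℤ} {δ : SL(2, ℤ)} (hδ : δ ∈ Gamma0 N)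
    {j j' : ℕ} (hdvd : (N : ℤ) ∣ e * (δ 0 0 - δ 1 1) - e ^ 2 * (δ 0 1 + j * δ 1 1 - j' * δ 0 0)) :
    Ue e * ModularGroup.T ^ j * δ * (Ue e * ModularGroup.T ^ j')⁻¹ ∈ Gamma0 N := by
  rw [Gamma0_mem, Ue_mul_T_pow_mul_mul_inv_one_zero, ZMod.intCast_zmod_eq_zero_iff_dvd]
  exact hdvd.add (((ZMod.intCast_zmod_eq_zero_iff_dvd _ _).mp (Gamma0_mem.mp hδ)).mul_right _
    |>.mul_right _)

lemma Finset.sum_range_eq_sum_zmod_val {M : Type*} [AddCommMonoid M] (n : ℕ) [NeZero n]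
    (F : ℕ → M) : ∑ j ∈ Finset.range n, F j = ∑ x : ZMod n, F x.val := by
  symm
  refine Finset.sum_nbij ZMod.val (fun x _ ↦ Finset.mem_range.mpr (ZMod.val_lt x))
    (ZMod.val_injective n).injOn (fun j hj ↦ ?_) (fun _ _ ↦ rfl)
  exact ⟨j, Finset.mem_coe.mpr (Finset.mem_univ _),
    ZMod.val_cast_of_lt (Finset.mem_range.mp hj)⟩

lemma ZMod.exists_bijective_forall_dvd {h : ℕ} [NeZero h] {u : ℕ} (hu : u.Coprime h)
    {a b d t : ℤ} (had : (h : ℤ) ∣ a * d - 1) :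
    ∃ σ : ZMod h → ZMod h, Function.Bijective σ ∧
      ∀ x, (h : ℤ) ∣ t - u * (b + x.val * d - (σ x).val * a) := by
  have hAD : (a : ZMod h) * d = 1 := by
    rw [← sub_eq_zero, ← Int.cast_one, ← Int.cast_mul, ← Int.cast_sub,
      ZMod.intCast_zmod_eq_zero_iff_dvd]
    exact had
  have hU := ZMod.coe_mul_inv_eq_one u hu
  -- solve `u (b + x d - y a) = t` for `y`, using `a⁻¹ = d`
  refine ⟨fun x ↦ d * (b + x * d - t * (u : ZMod h)⁻¹), ?_, fun x ↦ ?_⟩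
  · refine Finite.injective_iff_bijective.mp fun x y hxy ↦ ?_
    linear_combination (a : ZMod h) ^ 2 * hxy + ((a : ZMod h) * d + 1) * (y - x) * hAD
  · rw [← ZMod.intCast_zmod_eq_zero_iff_dvd]
    push_cast
    simp only [ZMod.natCast_val, ZMod.cast_id', id]
    linear_combination ((u : ZMod h) * (b + x * d) - t * u * (u : ZMod h)⁻¹) * hAD - t * hU

lemma Nat.gcd_sq_eq_mul_gcd_div {e N : ℕ} (heN : e ∣ N) :
    Nat.gcd (e ^ 2) N = e * Nat.gcd e (N / e) := by
  conv_lhs => rw [← Nat.mul_div_cancel' heN]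
  rw [sq, Nat.gcd_mul_left]

lemma Nat.div_gcd_sq_eq_div_div_gcd {e N : ℕ} (heN : e ∣ N) :
    N / Nat.gcd (e ^ 2) N = N / e / Nat.gcd e (N / e) := by
  rw [Nat.gcd_sq_eq_mul_gcd_div heN, Nat.div_div_eq_div_mul]

lemma Nat.mul_gcd_mul_div_gcd_sq {e N : ℕ} (heN : e ∣ N) :
    e * Nat.gcd e (N / e) * (N / Nat.gcd (e ^ 2) N) = N := by
  rw [Nat.div_gcd_sq_eq_div_div_gcd heN, mul_assoc, Nat.mul_div_cancel' (Nat.gcd_dvd_right _ _),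
    Nat.mul_div_cancel' heN]

lemma Nat.coprime_div_gcd_div_gcd_sq {e N : ℕ} (he : 0 < e) (heN : e ∣ N) :
    (e / Nat.gcd e (N / e)).Coprime (N / Nat.gcd (e ^ 2) N) := by
  rw [Nat.div_gcd_sq_eq_div_div_gcd heN]
  exact Nat.coprime_div_gcd_div_gcd (Nat.gcd_pos_of_pos_left _ he)

lemma Gamma0_dvd_mul_sub_one {N h : ℕ} (hhN : h ∣ N) {δ : SL(2, ℤ)} (hδ : δ ∈ Gamma0 N) :
    (h : ℤ) ∣ δ 0 0 * δ 1 1 - 1 := by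
  have hc : (N : ℤ) ∣ δ 1 0 := (ZMod.intCast_zmod_eq_zero_iff_dvd _ _).mp (Gamma0_mem.mp hδ)
  have hdet : δ 0 0 * δ 1 1 - δ 0 1 * δ 1 0 = 1 := by
    rw [← Matrix.det_fin_two]
    exact δ.2
  rw [show δ 0 0 * δ 1 1 - 1 = δ 0 1 * δ 1 0 by linarith]
  exact (Int.natCast_dvd_natCast.mpr hhN).trans (hc.mul_left _)

/-- Let `N` be a positive integer, `e` a positive divisor of `N`, `k` an integer, and `f` a
modular form of weight `k` for `Γ₀(N)`.  Set `h = N / gcd(e², N)` and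
`g = ∑_{j=0}^{h-1} f ∣[k] (U_e T^j)`.  Then for every `δ = [[a,b],[c,d]] ∈ Γ₀(N)` with
`a ≡ d (mod gcd(e, N/e))` we have `g ∣[k] δ = g`. -/
theorem stmt_0 (N : ℕ) (hN : 0 < N) (e : ℕ) (he : 0 < e) (heN : e ∣ N) (k : ℤ)
    (f : ModularForm (Gamma0 N) k) (g : ℍ → ℂ)
    (hg : g = ∑ j ∈ Finset.range (N / Nat.gcd (e ^ 2) N),
      (⇑f) ∣[k] (Ue (e : ℤ) * ModularGroup.T ^ j))
    (δ : SL(2, ℤ)) (hδ : δ ∈ Gamma0 N)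
    (had : ((δ : Matrix (Fin 2) (Fin 2) ℤ) 0 0)
      ≡ ((δ : Matrix (Fin 2) (Fin 2) ℤ) 1 1) [ZMOD (Nat.gcd e (N / e))]) :
    g ∣[k] δ = g := by
  set g₀ := Nat.gcd e (N / e)
  set h := N / Nat.gcd (e ^ 2) N
  set u := e / g₀
  have hu : (e : ℤ) = g₀ * u := by exact_mod_cast (Nat.mul_div_cancel' (Nat.gcd_dvd_left _ _)).symm
  have hNh : e * g₀ * h = N := Nat.mul_gcd_mul_div_gcd_sq heN
  have : NeZero h := ⟨by rintro h0; rw [h0, mul_zero] at hNh; omega⟩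
  obtain ⟨t, ht⟩ := had.symm.dvd
  obtain ⟨σ, hσ, hσdvd⟩ := ZMod.exists_bijective_forall_dvd (Nat.coprime_div_gcd_div_gcd_sq he heN)
    (b := δ 0 1) (t := t) (Gamma0_dvd_mul_sub_one (Dvd.intro_left _ hNh) hδ)
  have hsummand (x : ZMod h) : (⇑f ∣[k] (Ue e * ModularGroup.T ^ x.val)) ∣[k] δ =
      ⇑f ∣[k] (Ue e * ModularGroup.T ^ (σ x).val) := by
    refine slash_slash_eq_slash_of_mul_mul_inv_mem f (Ue_mul_T_pow_mul_mul_inv_mem_Gamma0 hδ ?_)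
    obtain ⟨m, hm⟩ := hσdvd x
    have hNcast : ((e * g₀ * h : ℕ) : ℤ) = N := congrArg _ hNh
    push_cast at hNcast
    exact ⟨m, by linear_combination (e : ℤ) * ht + (e * g₀ : ℤ) * hm + m * hNcast
      - (e * (δ 0 1 + (x.val : ℤ) * δ 1 1 - ((σ x).val : ℤ) * δ 0 0)) * hu⟩
  rw [hg, SlashAction.sum_slash, Finset.sum_range_eq_sum_zmod_val, Finset.sum_range_eq_sum_zmod_val]
  exact (Finset.sum_congr rfl fun x _ ↦ hsummand x).trans (Fintype.sum_bijective σ hσ _ _ fun _ ↦ rfl)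
end

section
/- Let N be a positive integer, e a positive divisor of N, δ ∈ Γ₀(N), and set h = N / gcd(e², N). If n, m, n', m' are integers with n ≡ m (mod h) and n' ≡ m' (mod h), then U_e · T^n · δ · T^{−n'} · U_e^{−1} ∈ Γ₀(N) if and only if U_e · T^m · δ · T^{−m'} · U_e^{−1} ∈ Γ₀(N). -/
open Matrix CongruenceSubgroup
open scoped MatrixGroups

/-!
Modulo `N`, using that the lower-left entry of `δ` vanishes, the lower-left entry of
`U_e T^n δ T^{-n'} U_e⁻¹` depends on `n` and `n'` only through `e² n` and `e² n'`, and these are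
determined modulo `N` by `n` and `n'` modulo `N / gcd(e², N)`.
-/

theorem Int.ModEq.mul_left_of_modEq_div_gcd {a N : ℕ} {n m : ℤ}
    (h : n ≡ m [ZMOD (N / Nat.gcd a N)]) : (a : ℤ) * n ≡ a * m [ZMOD N] := by
  obtain ⟨k, hk⟩ := Int.natCast_dvd_natCast.mpr (Nat.gcd_dvd_left a N)
  have hgN : (Nat.gcd a N : ℤ) ∣ N := Int.natCast_dvd_natCast.mpr (Nat.gcd_dvd_right a N)
  refine (h.mul_left' (c := a)).of_dvd ⟨k, ?_⟩
  rw [hk, mul_comm _ k, mul_assoc, Int.mul_ediv_cancel' hgN, mul_comm]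

theorem Ue_inv (e : ℤ) : (Ue e)⁻¹ = Ue (-e) := by
  apply inv_eq_of_mul_eq_one_right
  ext i j
  simp only [Matrix.SpecialLinearGroup.coe_mul]
  fin_cases i <;> fin_cases j <;> simp [Ue, Matrix.mul_apply, Fin.sum_univ_succ]

theorem Ue_T_zpow_conj_apply_one_zero (e n n' : ℤ) (δ : SL(2, ℤ)) :
    (Ue e * ModularGroup.T ^ n * δ * ModularGroup.T ^ (-n') * (Ue e)⁻¹) 1 0
      = δ 1 0 * (e * n + 1) * (e * n' + 1) + e * δ 0 0 * (e * n' + 1)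
        - e * δ 1 1 * (e * n + 1) - e ^ 2 * δ 0 1 := by
  rw [Ue_inv]
  simp only [Matrix.SpecialLinearGroup.coe_mul, ModularGroup.coe_T_zpow]
  simp [Ue, Matrix.mul_apply, Matrix.vecMul, dotProduct, Fin.sum_univ_succ]
  ring

theorem Ue_T_zpow_conj_apply_one_zero_cast_of_mem_Gamma0 {N : ℕ} (e n n' : ℤ)
    {δ : SL(2, ℤ)} (hδ : δ ∈ Gamma0 N) :
    (((Ue e * ModularGroup.T ^ n * δ * ModularGroup.T ^ (-n') * (Ue e)⁻¹) 1 0 : ℤ) : ZMod N)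
      = ((e * (δ 0 0 - δ 1 1 - e * δ 0 1) + (e ^ 2 * n' * δ 0 0 - e ^ 2 * n * δ 1 1) : ℤ)
          : ZMod N) := by
  have hc : ((δ 1 0 : ℤ) : ZMod N) = 0 := Gamma0_mem.mp hδ
  rw [Ue_T_zpow_conj_apply_one_zero]
  push_cast
  linear_combination ((e : ZMod N) * n + 1) * (e * n' + 1) * hc

theorem stmt_6_general (N : ℕ) (e : ℕ)
    (δ : SL(2, ℤ)) (hδ : δ ∈ Gamma0 N) (n m n' m' : ℤ)
    (hnm : n ≡ m [ZMOD (N / Nat.gcd (e ^ 2) N)])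
    (hnm' : n' ≡ m' [ZMOD (N / Nat.gcd (e ^ 2) N)]) :
    (Ue (e : ℤ) * ModularGroup.T ^ n * δ * ModularGroup.T ^ (-n') * (Ue (e : ℤ))⁻¹
        ∈ Gamma0 N) ↔
      (Ue (e : ℤ) * ModularGroup.T ^ m * δ * ModularGroup.T ^ (-m') * (Ue (e : ℤ))⁻¹
        ∈ Gamma0 N) := by
  have hn := Int.ModEq.mul_left_of_modEq_div_gcd hnm
  have hn' := Int.ModEq.mul_left_of_modEq_div_gcd hnm'
  push_cast at hn hn'
  rw [Gamma0_mem, Gamma0_mem, Ue_T_zpow_conj_apply_one_zero_cast_of_mem_Gamma0 _ _ _ hδ,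
    Ue_T_zpow_conj_apply_one_zero_cast_of_mem_Gamma0 _ _ _ hδ,
    (ZMod.intCast_eq_intCast_iff _ _ N).mpr
      (((hn'.mul_right (δ 0 0)).sub (hn.mul_right (δ 1 1))).add_left _)]

/-- Let `N` be a positive integer, `e` a positive divisor of `N`, `δ ∈ Γ₀(N)`, and set
`h = N / gcd(e², N)`.  If `n ≡ m (mod h)` and `n' ≡ m' (mod h)`, then
`U_e T^n δ T^{-n'} U_e⁻¹ ∈ Γ₀(N)` if and only if `U_e T^m δ T^{-m'} U_e⁻¹ ∈ Γ₀(N)`. -/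
theorem stmt_6 (N : ℕ) (hN : 0 < N) (e : ℕ) (he : 0 < e) (heN : e ∣ N)
    (δ : SL(2, ℤ)) (hδ : δ ∈ Gamma0 N) (n m n' m' : ℤ)
    (hnm : n ≡ m [ZMOD (N / Nat.gcd (e ^ 2) N)])
    (hnm' : n' ≡ m' [ZMOD (N / Nat.gcd (e ^ 2) N)]) :
    (Ue (e : ℤ) * ModularGroup.T ^ n * δ * ModularGroup.T ^ (-n') * (Ue (e : ℤ))⁻¹
        ∈ Gamma0 N) ↔
      (Ue (e : ℤ) * ModularGroup.T ^ m * δ * ModularGroup.T ^ (-m') * (Ue (e : ℤ))⁻¹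
        ∈ Gamma0 N) :=
  stmt_6_general N e δ hδ n m n' m' hnm hnm'
end

section
/- Let h be a positive integer, c : ℤ → ℂ, and F : ℍ → ℂ a function such that for every τ ∈ ℍ the series Σ_{n∈ℤ} c(n)·exp(2πi·n·τ/h) converges (in the sense of unconditional summation, HasSum) to F(τ). Then for every τ ∈ ℍ, the series Σ_{n∈ℤ} c(h·n)·exp(2πi·n·τ) converges (HasSum) to (1/h)·Σ_{j=0}^{h−1} F(τ + j). In other words, averaging F over the translates τ, τ+1, …, τ+h−1 extracts exactly the terms of its Fourier expansion with integral exponents. -/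
/-!
Translating `τ` by `j` multiplies the `n`-th term of the expansion by `ζ ^ (n * j)`, where
`ζ = exp (2πi / h)`. Averaging over `j < h` therefore multiplies it by `1` if `h ∣ n` and by `0`
otherwise (orthogonality of the `h`-th roots of unity), and the surviving terms are reindexed
by `n ↦ h * n`.
-/

open UpperHalfPlane Complex

theorem IsPrimitiveRoot.sum_range_pow_zpow {K : Type*} [Field K] {ζ : K} {h : ℕ}
    (hζ : IsPrimitiveRoot ζ h) (n : ℤ) :
    ∑ j ∈ Finset.range h, (ζ ^ n) ^ j = if (h : ℤ) ∣ n then (h : K) else 0 := by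
  split_ifs with hdvd
  · simp [(hζ.zpow_eq_one_iff_dvd n).2 hdvd]
  · have hne : ζ ^ n ≠ 1 := mt (hζ.zpow_eq_one_iff_dvd n).1 hdvd
    have hpow : (ζ ^ n) ^ h = 1 := by
      rw [← zpow_natCast, ← zpow_mul, mul_comm, zpow_mul, hζ.zpow_eq_one, one_zpow]
    rw [geom_sum_eq hne, hpow, sub_self, zero_div]

theorem hasSum_comp_mul_left_iff {M : Type*} [AddCommMonoid M] [TopologicalSpace M]
    {f : ℤ → M} {a : M} {h : ℤ} (hh : h ≠ 0) (hf : ∀ n, ¬h ∣ n → f n = 0) :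
    HasSum (fun n => f (h * n)) a ↔ HasSum f a :=
  (mul_right_injective₀ hh).hasSum_iff fun n hn => hf n fun ⟨k, hk⟩ => hn ⟨k, hk.symm⟩

lemma exp_two_pi_I_mul_vadd_div (h : ℕ) (n : ℤ) (τ : ℍ) (j : ℕ) :
    exp (2 * Real.pi * Complex.I * n * (((j : ℝ) +ᵥ τ : ℍ) : ℂ) / h)
      = exp (2 * Real.pi * Complex.I * n * τ / h)
        * (exp (2 * Real.pi * Complex.I / h) ^ n) ^ j := by
  rw [coe_vadd, ← exp_int_mul, ← exp_nat_mul, ← exp_add]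
  push_cast
  ring_nf

lemma inv_mul_sum_range_exp_two_pi_I_mul_vadd_div (h : ℕ) (hh : h ≠ 0) (n : ℤ) (τ : ℍ) :
    (h : ℂ)⁻¹ * ∑ j ∈ Finset.range h,
        exp (2 * Real.pi * Complex.I * n * (((j : ℝ) +ᵥ τ : ℍ) : ℂ) / h)
      = if (h : ℤ) ∣ n then exp (2 * Real.pi * Complex.I * n * τ / h) else 0 := by
  simp_rw [exp_two_pi_I_mul_vadd_div, ← Finset.mul_sum,
    (isPrimitiveRoot_exp h hh).sum_range_pow_zpow n]
  split_ifs
  · field_simp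
  · simp

/-- Let `h` be a positive integer, `c : ℤ → ℂ`, and `F : ℍ → ℂ` such that for every `τ ∈ ℍ`
the series `∑_{n ∈ ℤ} c(n)·exp(2πi·n·τ/h)` sums to `F(τ)`.  Then for every `τ ∈ ℍ` the series
`∑_{n ∈ ℤ} c(h·n)·exp(2πi·n·τ)` sums to `(1/h)·∑_{j=0}^{h-1} F(τ + j)`: averaging `F` over
`τ, τ+1, …, τ+h-1` extracts exactly the terms of the Fourier expansion with integral
exponents. -/
theorem stmt_12 (h : ℕ) (hh : 0 < h) (c : ℤ → ℂ) (F : ℍ → ℂ)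
    (hF : ∀ τ : ℍ, HasSum
      (fun n : ℤ => c n * Complex.exp (2 * Real.pi * Complex.I * n * (τ : ℂ) / h)) (F τ)) :
    ∀ τ : ℍ, HasSum
      (fun n : ℤ => c (h * n) * Complex.exp (2 * Real.pi * Complex.I * n * (τ : ℂ)))
      ((h : ℂ)⁻¹ * ∑ j ∈ Finset.range h, F ((j : ℝ) +ᵥ τ)) := by
  intro τ
  have hh_int : (h : ℤ) ≠ 0 := by exact_mod_cast hh.ne'
  have hAvg : HasSum (fun n : ℤ => c n * ((h : ℂ)⁻¹ * ∑ j ∈ Finset.range h,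
      exp (2 * Real.pi * Complex.I * n * (((j : ℝ) +ᵥ τ : ℍ) : ℂ) / h)))
      ((h : ℂ)⁻¹ * ∑ j ∈ Finset.range h, F ((j : ℝ) +ᵥ τ)) := by
    simpa only [Finset.mul_sum, mul_left_comm (h : ℂ)⁻¹] using
      (hasSum_sum (s := Finset.range h) fun j _ => hF ((j : ℝ) +ᵥ τ)).mul_left (h : ℂ)⁻¹
  simp_rw [inv_mul_sum_range_exp_two_pi_I_mul_vadd_div h hh.ne', mul_ite, mul_zero] at hAvg
  rw [← hasSum_comp_mul_left_iff hh_int fun n hn => if_neg hn] at hAvg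
  convert hAvg using 2 with n
  rw [if_pos (dvd_mul_right _ _)]
  have hne : (h : ℂ) ≠ 0 := Nat.cast_ne_zero.2 hh.ne'
  push_cast
  field_simp
end

section
/- Let U ⊆ ℂ be an open set, p a positive integer, and f : ℂ → ℂ a function that is continuous on U and such that z ↦ f(z)^p is complex-differentiable on U (holomorphic on U). Then f is complex-differentiable on U. -/
open Filter
open scoped Topology

/-- Away from the zeros of `f`, the map `w ↦ w ^ p` has a differentiable local inverse near
`f x`, and composing it with `f ^ p` recovers `f` near `x`. -/
theorem DifferentiableAt.of_pow_of_ne_zero {𝕜 E : Type*} [NontriviallyNormedField 𝕜]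
    [CompleteSpace 𝕜] [CharZero 𝕜] [NormedAddCommGroup E] [NormedSpace 𝕜 E] {f : E → 𝕜} {x : E}
    {p : ℕ} (hp : p ≠ 0) (hc : ContinuousAt f x) (hd : DifferentiableAt 𝕜 (fun z => f z ^ p) x)
    (hx : f x ≠ 0) : DifferentiableAt 𝕜 f x := by
  have hpow : HasStrictDerivAt (fun w : 𝕜 => w ^ p) (p * f x ^ (p - 1)) (f x) :=
    hasStrictDerivAt_pow p (f x)
  have hderiv : (p : 𝕜) * f x ^ (p - 1) ≠ 0 :=
    mul_ne_zero (Nat.cast_ne_zero.2 hp) (pow_ne_zero _ hx)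
  set g := hpow.localInverse _ _ _ hderiv
  have hg : DifferentiableAt 𝕜 g (f x ^ p) :=
    (hpow.to_localInverse hderiv).hasDerivAt.differentiableAt
  have hleft : ∀ᶠ z in 𝓝 x, g (f z ^ p) = f z :=
    hc.eventually (hpow.hasStrictFDerivAt_equiv hderiv).eventually_left_inverse
  exact (hg.comp x hd).congr_of_eventuallyEq (hleft.mono fun _ h => h.symm)

/-- Either `f ^ p` vanishes near `z₀`, and so does `f`, or `f` has no zeros in a punctured
neighbourhood of `z₀`, where it is then differentiable; continuity at `z₀` makes the singularity
removable. -/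
theorem Complex.analyticAt_of_pow {f : ℂ → ℂ} {z₀ : ℂ} {p : ℕ} (hp : p ≠ 0)
    (hc : ∀ᶠ z in 𝓝 z₀, ContinuousAt f z) (ha : AnalyticAt ℂ (fun z => f z ^ p) z₀) :
    AnalyticAt ℂ f z₀ := by
  rcases ha.eventually_eq_zero_or_eventually_ne_zero with hzero | hne
  · have hf : f =ᶠ[𝓝 z₀] fun _ => 0 := hzero.mono fun _ h => pow_eq_zero_iff hp |>.mp h
    exact analyticAt_const.congr hf.symm
  · refine analyticAt_of_differentiable_on_punctured_nhds_of_continuousAt ?_ hc.self_of_nhds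
    filter_upwards [hne, nhdsWithin_le_nhds hc, nhdsWithin_le_nhds ha.eventually_analyticAt]
      with z hz hcz haz
    exact haz.differentiableAt.of_pow_of_ne_zero hp hcz fun h0 => hz (by simp [h0, hp])

/-- Let `U ⊆ ℂ` be open, `p` a positive integer, and `f : ℂ → ℂ` continuous on `U` such that
`z ↦ f(z)^p` is holomorphic on `U`.  Then `f` is holomorphic on `U`. -/
theorem stmt_14 (U : Set ℂ) (hU : IsOpen U) (p : ℕ) (hp : 0 < p) (f : ℂ → ℂ)
    (hf : ContinuousOn f U) (hfp : DifferentiableOn ℂ (fun z => f z ^ p) U) :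
    DifferentiableOn ℂ f U := by
  intro z hz
  have hcont : ∀ᶠ w in 𝓝 z, ContinuousAt f w :=
    eventually_of_mem (hU.mem_nhds hz) fun w hw => hf.continuousAt (hU.mem_nhds hw)
  exact (Complex.analyticAt_of_pow hp.ne' hcont
    (hfp.analyticAt (hU.mem_nhds hz))).differentiableAt.differentiableWithinAt
end

section
/- Let m be a positive integer and c : ℕ → ℂ a function satisfying c(k) = c(gcd(k, m)) for every positive integer k. Then for every positive integer d that does not divide m, Σ_{d' | d} μ(d/d')·c(d') = 0, where the sum is over the positive divisors d' of d and μ is the Möbius function. -/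
open ArithmeticFunction
open scoped ArithmeticFunction.Moebius

/-!
Write `a = μ * c` for the Möbius transform of `c`, so that `c n = ∑_{e ∣ n} a e`. If `c` only
depends on `gcd(·, m)`, then `c k = c (gcd k m) = ∑_{e ∣ k, e ∣ m} a e`, i.e. `c` is also the
divisor sum of `a` truncated to the divisors of `m`. Uniqueness in Möbius inversion forces the
truncation to be `a` itself, so `a` vanishes off the divisors of `m`.
-/

namespace Nat

theorem divisors_filter_dvd (m : ℕ) {k : ℕ} (hk : k ≠ 0) :
    {e ∈ k.divisors | e ∣ m} = (k.gcd m).divisors := by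
  ext e
  simp [Nat.dvd_gcd_iff, hk, Nat.gcd_eq_zero_iff]

end Nat

variable {R : Type*} [NonAssocRing R]

def moebiusTransform (c : ℕ → R) (n : ℕ) : R :=
  ∑ d' ∈ n.divisors, (μ (n / d') : R) * c d'

theorem moebiusTransform_eq_sum_divisorsAntidiagonal (c : ℕ → R) (n : ℕ) :
    moebiusTransform c n = ∑ x ∈ n.divisorsAntidiagonal, (μ x.1 : R) * c x.2 :=
  (Nat.sum_divisorsAntidiagonal' (fun a b => (μ a : R) * c b)).symm

theorem sum_divisors_moebiusTransform (c : ℕ → R) {n : ℕ} (hn : 0 < n) :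
    ∑ e ∈ n.divisors, moebiusTransform c e = c n := by
  refine sum_eq_iff_sum_mul_moebius_eq.mpr (fun k _ => ?_) n hn
  exact (moebiusTransform_eq_sum_divisorsAntidiagonal c k).symm

theorem moebiusTransform_eq_zero_of_not_dvd {m : ℕ} {c : ℕ → R}
    (hc : ∀ k : ℕ, 0 < k → c k = c (k.gcd m)) {d : ℕ} (hdm : ¬ d ∣ m) :
    moebiusTransform c d = 0 := by
  rcases d.eq_zero_or_pos with rfl | hd
  · simp [moebiusTransform]
  let truncated : ℕ → R := fun e => if e ∣ m then moebiusTransform c e else 0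
  have truncated_sum : ∀ k > 0, ∑ e ∈ k.divisors, truncated e = c k := by
    intro k hk
    rw [Finset.sum_ite, Finset.sum_const_zero, add_zero, Nat.divisors_filter_dvd m hk.ne',
      sum_divisors_moebiusTransform c (Nat.gcd_pos_of_pos_left m hk), ← hc k hk]
  have inversion := sum_eq_iff_sum_mul_moebius_eq.mp truncated_sum d hd
  rw [← moebiusTransform_eq_sum_divisorsAntidiagonal] at inversion
  simpa [truncated, hdm] using inversion

theorem stmt_15_general (m : ℕ) (c : ℕ → ℂ)
    (hc : ∀ k : ℕ, 0 < k → c k = c (Nat.gcd k m))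
    (d : ℕ) (hdm : ¬ d ∣ m) :
    ∑ d' ∈ d.divisors, (μ (d / d') : ℂ) * c d' = 0 :=
  moebiusTransform_eq_zero_of_not_dvd hc hdm

/-- Let `m` be a positive integer and `c : ℕ → ℂ` satisfy `c(k) = c(gcd(k, m))` for every
positive integer `k`.  Then for every positive integer `d` not dividing `m`,
`∑_{d' ∣ d} μ(d/d')·c(d') = 0`, where `μ` is the Möbius function. -/
theorem stmt_15 (m : ℕ) (hm : 0 < m) (c : ℕ → ℂ)
    (hc : ∀ k : ℕ, 0 < k → c k = c (Nat.gcd k m))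
    (d : ℕ) (hd : 0 < d) (hdm : ¬ d ∣ m) :
    ∑ d' ∈ d.divisors, (μ (d / d') : ℂ) * c d' = 0 :=
  stmt_15_general m c hc d hdm
end

section
/- Let n be a positive integer and b : ℕ → ℤ a function. In the ring ℂ⟦X⟧ of formal power series over ℂ, define P = Π_{d | n} (1 − X^d)^{b(d)}, the product over positive divisors d of n, where each factor is the b(d)-th power of the unit 1 − X^d (negative exponents interpreted via the inverse of this unit). Define c(k) = Σ_{d | gcd(k,n)} d·b(d) for positive integers k, and let Q be the formal power series Σ_{k≥1} c(k)·X^k. Then X·P′ = −Q·P, where P′ denotes the formal derivative of P. (Equivalently, since P has constant term 1, P = exp(−Σ_{k≥1} c(k)·X^k/k).) -/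
/-!
The Euler operator `θ = X d/dX` is a derivation, so `U ↦ θ U / U` turns products and integer
powers of units into sums and multiples. Hence
`θ P / P = ∑_{d ∣ n} b(d) θ(1 - X^d) / (1 - X^d)`, and
`θ(1 - X^d) / (1 - X^d) = -d X^d / (1 - X^d) = -d ∑_{j ≥ 1} X^{dj}`, whose sum over `d` has
`X^k`-coefficient `-∑_{d ∣ gcd(k, n)} d b(d) = -c(k)`.
-/

open PowerSeries

namespace Derivation

variable {R A : Type*} [CommSemiring R] [CommRing A] [Algebra R A] (D : Derivation R A A)

def logDerivUnits : Aˣ →* Multiplicative A where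
  toFun U := .ofAdd (D U * ↑U⁻¹)
  map_one' := by simp
  map_mul' U V := by
    simp only [Units.val_mul, mul_inv_rev, leibniz, smul_eq_mul, ← ofAdd_add]
    congr 1
    linear_combination (D V * ↑V⁻¹) * U.mul_inv + (D U * ↑U⁻¹) * V.mul_inv

theorem toAdd_logDerivUnits (U : Aˣ) : (D.logDerivUnits U).toAdd = D U * ↑U⁻¹ := rfl

theorem apply_unit_eq_logDerivUnits_mul (U : Aˣ) : D U = (D.logDerivUnits U).toAdd * U := by
  simp [toAdd_logDerivUnits, mul_assoc]

theorem toAdd_logDerivUnits_prod_zpow {ι : Type*} (s : Finset ι) (u : ι → Aˣ) (b : ι → ℤ) :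
    (D.logDerivUnits (∏ i ∈ s, u i ^ b i)).toAdd =
      ∑ i ∈ s, b i • (D.logDerivUnits (u i)).toAdd := by
  simp only [map_prod, map_zpow, toAdd_prod, toAdd_zpow]

end Derivation

namespace PowerSeries

section CommSemiring

variable (R : Type*) [CommSemiring R]

noncomputable def eulerDerivation : Derivation R R⟦X⟧ R⟦X⟧ := (X : R⟦X⟧) • derivative R

variable {R}

theorem eulerDerivation_apply (f : R⟦X⟧) : eulerDerivation R f = X * derivative R f := rfl

theorem eulerDerivation_X_pow (d : ℕ) : eulerDerivation R (X ^ d) = (d : R⟦X⟧) * X ^ d := by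
  rw [eulerDerivation_apply, Derivation.leibniz_pow, derivative_X, smul_eq_mul, mul_one,
    nsmul_eq_mul]
  rcases d with _ | d
  · simp
  · rw [Nat.add_sub_cancel]
    ring

end CommSemiring

variable {R : Type*} [CommRing R]

theorem val_inv_eq_mk_of_val_eq_one_sub_X_pow {d : ℕ} (hd : d ≠ 0) {u : R⟦X⟧ˣ}
    (hu : (u : R⟦X⟧) = 1 - X ^ d) :
    (↑u⁻¹ : R⟦X⟧) = mk fun k => if d ∣ k then 1 else 0 := by
  have hexpand : (mk fun k => if d ∣ k then (1 : R) else 0) = expand d hd (mk 1) := by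
    ext k; simp [coeff_expand]
  rw [hexpand]
  apply Units.inv_eq_of_mul_eq_one_right
  rw [hu, mul_comm, ← expand_X d hd, ← map_one (expand d hd), ← map_sub, ← map_mul,
    mk_one_mul_one_sub_eq_one, map_one]

theorem toAdd_logDerivUnits_of_val_eq_one_sub_X_pow {d : ℕ} (hd : d ≠ 0) {u : R⟦X⟧ˣ}
    (hu : (u : R⟦X⟧) = 1 - X ^ d) :
    ((eulerDerivation R).logDerivUnits u).toAdd =
      (d : R⟦X⟧) * (1 - mk fun k => if d ∣ k then 1 else 0) := by
  rw [Derivation.toAdd_logDerivUnits, ← val_inv_eq_mk_of_val_eq_one_sub_X_pow hd hu, hu, map_sub,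
    Derivation.map_one_eq_zero, eulerDerivation_X_pow]
  linear_combination (d : R⟦X⟧) * u.inv_mul - (d : R⟦X⟧) * ↑u⁻¹ * hu

theorem sum_divisors_zsmul_natCast_mul_one_sub_mk_dvd {n : ℕ} (hn : n ≠ 0) (b : ℕ → ℤ) :
    ∑ d ∈ n.divisors, b d • ((d : R⟦X⟧) * (1 - mk fun k => if d ∣ k then 1 else 0)) =
      -mk fun k => if k = 0 then 0 else ∑ d ∈ (k.gcd n).divisors, (d : R) * b d := by
  ext k
  rw [map_sum, map_neg, coeff_mk]
  rcases eq_or_ne k 0 with rfl | hk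
  · simp
  have hdivisors : (k.gcd n).divisors = n.divisors.filter (· ∣ k) := by
    ext d
    have := Nat.gcd_ne_zero_right (m := k) hn
    simp only [Finset.mem_filter, Nat.mem_divisors, Nat.dvd_gcd_iff]
    tauto
  rw [if_neg hk, hdivisors, Finset.sum_filter, ← Finset.sum_neg_distrib]
  refine Finset.sum_congr rfl fun d _ => ?_
  rw [← map_natCast (C (R := R)), map_zsmul, coeff_C_mul, map_sub, coeff_one, coeff_mk,
    if_neg hk]
  split_ifs <;> simp [zsmul_eq_mul, mul_comm]

end PowerSeries

/-- Let `n` be a positive integer and `b : ℕ → ℤ`.  In `ℂ⟦X⟧`, let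
`P = ∏_{d ∣ n} (1 - X^d)^{b(d)}` (each factor being an integer power of the unit `1 - X^d`,
here given by units `u d` with `↑(u d) = 1 - X^d`).  Let `c(k) = ∑_{d ∣ gcd(k,n)} d·b(d)` for
`k ≥ 1` and `Q = ∑_{k ≥ 1} c(k)·X^k`.  Then `X·P′ = -Q·P`, where `P′` is the formal
derivative of `P`; equivalently `P = exp(-∑_{k ≥ 1} c(k)·X^k/k)`. -/
theorem stmt_16 (n : ℕ) (hn : 0 < n) (b : ℕ → ℤ)
    (u : ℕ → (PowerSeries ℂ)ˣ)
    (hu : ∀ d ∈ n.divisors, ((u d : PowerSeries ℂ)) = 1 - (PowerSeries.X : PowerSeries ℂ) ^ d)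
    (P : PowerSeries ℂ)
    (hP : P = ∏ d ∈ n.divisors, ((u d ^ b d : (PowerSeries ℂ)ˣ) : PowerSeries ℂ))
    (c : ℕ → ℂ)
    (hc : ∀ k : ℕ, 0 < k → c k = ∑ d ∈ (Nat.gcd k n).divisors, (d : ℂ) * (b d : ℂ))
    (Q : PowerSeries ℂ)
    (hQ : Q = PowerSeries.mk fun k => if k = 0 then 0 else c k) :
    PowerSeries.X * (PowerSeries.derivative ℂ P) = -Q * P := by
  have hQ' : Q = mk fun k => if k = 0 then 0 else ∑ d ∈ (k.gcd n).divisors, (d : ℂ) * b d := by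
    rw [hQ]
    congr 1
    funext k
    split_ifs with hk
    · rfl
    · exact hc k (Nat.pos_of_ne_zero hk)
  have hlog : ((eulerDerivation ℂ).logDerivUnits (∏ d ∈ n.divisors, u d ^ b d)).toAdd = -Q := by
    rw [Derivation.toAdd_logDerivUnits_prod_zpow, hQ',
      ← sum_divisors_zsmul_natCast_mul_one_sub_mk_dvd hn.ne']
    refine Finset.sum_congr rfl fun d hd => ?_
    rw [toAdd_logDerivUnits_of_val_eq_one_sub_X_pow ((Nat.pos_of_mem_divisors hd).ne') (hu d hd)]
  rw [← eulerDerivation_apply, hP, ← Units.coe_prod, Derivation.apply_unit_eq_logDerivUnits_mul,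
    hlog]
end
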